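/- arXiv:2603.26428 — 2 statements merged into one kernel-verified Lean document; each statement's English description precedes it below -/
import Mathlib

section
/- For any nonempty metric spaces X, Y, Z, the lower semicontinuous Gromov–Hausdorff distance satisfies the triangle inequality: d^{ls}_GH(X,Z) ≤ d^{ls}_GH(X,Y) + d^{ls}_GH(Y,Z). -/
/-!
Relational composition `R ○ S` of correspondences is again a correspondence, its distortion is
at most `dis R + dis S` by the triangle inequality in `ℝ`, and lower semicontinuity of set-valued
maps is preserved under composition (pull an open set back through `S`, then through `R`).
Composing near-optimal correspondences for `(X, Y)` and `(Y, Z)` therefore bounds `dGHls X Z`.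
-/

open Metric Set
open scoped ENNReal

/-- Distortion of a relation `σ ⊆ X × Y`, valued in `[0,∞]`. -/
noncomputable def dis {X Y : Type*} [MetricSpace X] [MetricSpace Y]
    (σ : Set (X × Y)) : ℝ≥0∞ :=
  ⨆ (p ∈ σ) (q ∈ σ), ENNReal.ofReal |dist p.1 q.1 - dist p.2 q.2|

/-- A correspondence is a relation whose projections to both factors are surjective. -/
def IsCorrespondence {X Y : Type*} (R : Set (X × Y)) : Prop :=
  (∀ x, ∃ y, (x, y) ∈ R) ∧ (∀ y, ∃ x, (x, y) ∈ R)

/-- The set-valued map `X ⇉ Y` determined by a relation `R ⊆ X × Y`. -/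
def corrMap {X Y : Type*} (R : Set (X × Y)) : X → Set Y := fun x => {y | (x, y) ∈ R}

/-- The inverse set-valued map `Y ⇉ X` determined by a relation `R ⊆ X × Y`. -/
def corrInv {X Y : Type*} (R : Set (X × Y)) : Y → Set X := fun y => {x | (x, y) ∈ R}

/-- Upper semicontinuity of a set-valued map. -/
def SVUpperSemicontinuous {X Y : Type*} [TopologicalSpace X] [TopologicalSpace Y]
    (f : X → Set Y) : Prop :=
  ∀ x : X, ∀ U : Set Y, IsOpen U → f x ⊆ U →
    ∃ V : Set X, IsOpen V ∧ x ∈ V ∧ ∀ x' ∈ V, f x' ⊆ U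

/-- Lower semicontinuity of a set-valued map. -/
def SVLowerSemicontinuous {X Y : Type*} [TopologicalSpace X] [TopologicalSpace Y]
    (f : X → Set Y) : Prop :=
  ∀ x : X, ∀ U : Set Y, IsOpen U → (f x ∩ U).Nonempty →
    ∃ V : Set X, IsOpen V ∧ x ∈ V ∧ ∀ x' ∈ V, (f x' ∩ U).Nonempty

/-- The Gromov–Hausdorff distance defined via distortion of correspondences. -/
noncomputable def dGH (X Y : Type*) [MetricSpace X] [MetricSpace Y] : ℝ≥0∞ :=
  2⁻¹ * ⨅ (R : Set (X × Y)) (_ : IsCorrespondence R), dis R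

/-- The upper semicontinuous Gromov–Hausdorff distance. -/
noncomputable def dGHus (X Y : Type*) [MetricSpace X] [MetricSpace Y] : ℝ≥0∞ :=
  2⁻¹ * ⨅ (R : Set (X × Y))
    (_ : IsCorrespondence R ∧ SVUpperSemicontinuous (corrMap R) ∧
      SVUpperSemicontinuous (corrInv R)), dis R

/-- The lower semicontinuous Gromov–Hausdorff distance. -/
noncomputable def dGHls (X Y : Type*) [MetricSpace X] [MetricSpace Y] : ℝ≥0∞ :=
  2⁻¹ * ⨅ (R : Set (X × Y))
    (_ : IsCorrespondence R ∧ SVLowerSemicontinuous (corrMap R) ∧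
      SVLowerSemicontinuous (corrInv R)), dis R

open SetRel

def IsLSCCorrespondence {X Y : Type*} [TopologicalSpace X] [TopologicalSpace Y]
    (R : Set (X × Y)) : Prop :=
  IsCorrespondence R ∧ SVLowerSemicontinuous (corrMap R) ∧ SVLowerSemicontinuous (corrInv R)

lemma ofReal_le_dis {X Y : Type*} [MetricSpace X] [MetricSpace Y] {σ : Set (X × Y)}
    {x x' : X} {y y' : Y} (h : (x, y) ∈ σ) (h' : (x', y') ∈ σ) :
    ENNReal.ofReal |dist x x' - dist y y'| ≤ dis σ :=
  le_iSup₂_of_le (x, y) h <| le_iSup₂_of_le (x', y') h' le_rfl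

lemma dis_comp_le {X Y Z : Type*} [MetricSpace X] [MetricSpace Y] [MetricSpace Z]
    (R : Set (X × Y)) (S : Set (Y × Z)) :
    dis (R ○ S) ≤ dis R + dis S := by
  refine iSup₂_le fun ⟨x, z⟩ ⟨y, hxy, hyz⟩ => iSup₂_le fun ⟨x', z'⟩ ⟨y', hxy', hyz'⟩ => ?_
  calc ENNReal.ofReal |dist x x' - dist z z'|
      ≤ ENNReal.ofReal (|dist x x' - dist y y'| + |dist y y' - dist z z'|) :=
        ENNReal.ofReal_le_ofReal (abs_sub_le _ _ _)
    _ ≤ dis R + dis S := by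
        rw [ENNReal.ofReal_add (abs_nonneg _) (abs_nonneg _)]
        exact add_le_add (ofReal_le_dis hxy hxy') (ofReal_le_dis hyz hyz')

lemma IsCorrespondence.comp {X Y Z : Type*} {R : Set (X × Y)} {S : Set (Y × Z)}
    (hR : IsCorrespondence R) (hS : IsCorrespondence S) :
    IsCorrespondence (R ○ S) := by
  constructor
  · intro x
    obtain ⟨y, hxy⟩ := hR.1 x
    obtain ⟨z, hyz⟩ := hS.1 y
    exact ⟨z, prodMk_mem_comp hxy hyz⟩
  · intro z
    obtain ⟨y, hyz⟩ := hS.2 z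
    obtain ⟨x, hxy⟩ := hR.2 y
    exact ⟨x, prodMk_mem_comp hxy hyz⟩

lemma SVLowerSemicontinuous.biUnion {X Y Z : Type*} [TopologicalSpace X] [TopologicalSpace Y]
    [TopologicalSpace Z] {f : X → Set Y} {g : Y → Set Z}
    (hf : SVLowerSemicontinuous f) (hg : SVLowerSemicontinuous g) :
    SVLowerSemicontinuous fun x => ⋃ y ∈ f x, g y := by
  intro x U hU ⟨z, hz, hzU⟩
  obtain ⟨y, hy, hzy⟩ := mem_iUnion₂.1 hz
  obtain ⟨W, hWo, hyW, hW⟩ := hg y U hU ⟨z, hzy, hzU⟩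
  obtain ⟨V, hVo, hxV, hV⟩ := hf x W hWo ⟨y, hy, hyW⟩
  refine ⟨V, hVo, hxV, fun x' hx' => ?_⟩
  obtain ⟨y', hy', hy'W⟩ := hV x' hx'
  obtain ⟨z', hz', hz'U⟩ := hW y' hy'W
  exact ⟨z', mem_iUnion₂.2 ⟨y', hy', hz'⟩, hz'U⟩

lemma corrMap_comp {X Y Z : Type*} (R : Set (X × Y)) (S : Set (Y × Z)) :
    corrMap (R ○ S) = fun x => ⋃ y ∈ corrMap R x, corrMap S y := by
  ext x z
  simp [corrMap]

lemma corrInv_comp {X Y Z : Type*} (R : Set (X × Y)) (S : Set (Y × Z)) :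
    corrInv (R ○ S) = fun z => ⋃ y ∈ corrInv S z, corrInv R y := by
  ext z x
  simp [corrInv, and_comm]

lemma IsLSCCorrespondence.comp {X Y Z : Type*} [TopologicalSpace X] [TopologicalSpace Y]
    [TopologicalSpace Z] {R : Set (X × Y)} {S : Set (Y × Z)}
    (hR : IsLSCCorrespondence R) (hS : IsLSCCorrespondence S) :
    IsLSCCorrespondence (R ○ S) :=
  ⟨hR.1.comp hS.1, corrMap_comp R S ▸ hR.2.1.biUnion hS.2.1,
    corrInv_comp R S ▸ hS.2.2.biUnion hR.2.2⟩

lemma ENNReal.iInf_le_iInf_add_iInf {ι κ μ : Sort*} {f : ι → ℝ≥0∞} {g : κ → ℝ≥0∞}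
    {h : μ → ℝ≥0∞} (H : ∀ i j, ∃ k, h k ≤ f i + g j) :
    ⨅ k, h k ≤ (⨅ i, f i) + ⨅ j, g j := by
  rw [ENNReal.iInf_add]
  refine le_iInf fun i => ?_
  rw [ENNReal.add_iInf]
  refine le_iInf fun j => ?_
  obtain ⟨k, hk⟩ := H i j
  exact iInf_le_of_le k hk

lemma dGHls_eq_iInf (X Y : Type*) [MetricSpace X] [MetricSpace Y] :
    dGHls X Y = 2⁻¹ * ⨅ R : {R : Set (X × Y) // IsLSCCorrespondence R}, dis R.1 := by
  rw [dGHls, iInf_subtype']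
  rfl

theorem stmt_9_general {X Y Z : Type*} [MetricSpace X] [MetricSpace Y] [MetricSpace Z] :
    dGHls X Z ≤ dGHls X Y + dGHls Y Z := by
  simp only [dGHls_eq_iInf, ← mul_add]
  refine mul_le_mul_right (ENNReal.iInf_le_iInf_add_iInf fun R S => ?_) _
  exact ⟨⟨R.1 ○ S.1, R.2.comp S.2⟩, dis_comp_le R.1 S.1⟩

theorem stmt_9 {X Y Z : Type*} [MetricSpace X] [MetricSpace Y] [MetricSpace Z]
    [Nonempty X] [Nonempty Y] [Nonempty Z] :
    dGHls X Z ≤ dGHls X Y + dGHls Y Z :=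
  stmt_9_general
end

section
/- For any nonempty metric spaces X and Y, d_GH(X,Y) = d^{ls}_GH(X,Y); that is, (1/2) inf{ dis R : R a correspondence between X and Y } equals (1/2) inf{ dis R : R a correspondence between X and Y with both R and R⁻¹ lower semicontinuous }. -/
open Metric Set
open scoped ENNReal

/-!
Thicken a correspondence `R` to the open `δ`-neighbourhood of `R` in `X × Y` (with the max
metric). It is still a correspondence, and being open, both of its set-valued maps are lower
semicontinuous. Moving the two endpoints of each pair by less than `δ` in both coordinates changes
each distance by less than `2δ`, so the distortion grows by at most `4δ`; letting `δ → 0` gives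
`d^{ls}_GH ≤ d_GH`, and the other inequality is trivial.
-/

lemma IsCorrespondence.mono {X Y : Type*} {R S : Set (X × Y)} (hR : IsCorrespondence R)
    (hRS : R ⊆ S) : IsCorrespondence S :=
  ⟨fun x => (hR.1 x).imp fun _ h => hRS h, fun y => (hR.2 y).imp fun _ h => hRS h⟩

lemma IsOpen.svLowerSemicontinuous_corrMap {X Y : Type*} [TopologicalSpace X]
    [TopologicalSpace Y] {R : Set (X × Y)} (hR : IsOpen R) :
    SVLowerSemicontinuous (corrMap R) := by
  rintro x U - ⟨y, hyR, hyU⟩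
  obtain ⟨u, v, hu, -, hxu, hyv, huv⟩ := isOpen_prod_iff.1 hR x y hyR
  exact ⟨u, hu, hxu, fun x' hx' => ⟨y, huv ⟨hx', hyv⟩, hyU⟩⟩

lemma IsOpen.svLowerSemicontinuous_corrInv {X Y : Type*} [TopologicalSpace X]
    [TopologicalSpace Y] {R : Set (X × Y)} (hR : IsOpen R) :
    SVLowerSemicontinuous (corrInv R) :=
  (hR.preimage continuous_swap).svLowerSemicontinuous_corrMap

lemma ofReal_le_dis_s13 {X Y : Type*} [MetricSpace X] [MetricSpace Y] {R : Set (X × Y)}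
    {p q : X × Y} (hp : p ∈ R) (hq : q ∈ R) :
    ENNReal.ofReal |dist p.1 q.1 - dist p.2 q.2| ≤ dis R :=
  le_iSup₂_of_le p hp (le_iSup₂_of_le q hq le_rfl)

lemma abs_dist_sub_dist_le {X Y : Type*} [PseudoMetricSpace X] [PseudoMetricSpace Y]
    (p q a b : X × Y) :
    |dist p.1 q.1 - dist p.2 q.2| ≤ |dist a.1 b.1 - dist a.2 b.2| + 2 * (dist p a + dist q b) := by
  have h₁ := dist_dist_dist_le p.1 q.1 a.1 b.1
  have h₂ := dist_dist_dist_le p.2 q.2 a.2 b.2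
  rw [Real.dist_eq, abs_le] at h₁ h₂
  have hpa := Prod.dist_eq (x := p) (y := a)
  have hqb := Prod.dist_eq (x := q) (y := b)
  rw [abs_le]
  constructor <;>
  linarith [le_max_left (dist p.1 a.1) (dist p.2 a.2), le_max_right (dist p.1 a.1) (dist p.2 a.2),
    le_max_left (dist q.1 b.1) (dist q.2 b.2), le_max_right (dist q.1 b.1) (dist q.2 b.2),
    le_abs_self (dist a.1 b.1 - dist a.2 b.2), neg_abs_le (dist a.1 b.1 - dist a.2 b.2)]

lemma dis_thickening_le {X Y : Type*} [MetricSpace X] [MetricSpace Y] (R : Set (X × Y))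
    (δ : ℝ) : dis (thickening δ R) ≤ dis R + ENNReal.ofReal (4 * δ) := by
  refine iSup₂_le fun p hp => iSup₂_le fun q hq => ?_
  obtain ⟨a, haR, hpa⟩ := mem_thickening_iff.1 hp
  obtain ⟨b, hbR, hqb⟩ := mem_thickening_iff.1 hq
  calc ENNReal.ofReal |dist p.1 q.1 - dist p.2 q.2|
      ≤ ENNReal.ofReal (|dist a.1 b.1 - dist a.2 b.2| + 4 * δ) :=
        ENNReal.ofReal_le_ofReal <| by linarith [abs_dist_sub_dist_le p q a b]
    _ ≤ ENNReal.ofReal |dist a.1 b.1 - dist a.2 b.2| + ENNReal.ofReal (4 * δ) :=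
        ENNReal.ofReal_add_le
    _ ≤ dis R + ENNReal.ofReal (4 * δ) := by gcongr; exact ofReal_le_dis_s13 haR hbR

theorem stmt_13_general {X Y : Type*} [MetricSpace X] [MetricSpace Y] :
    dGH X Y = dGHls X Y := by
  refine le_antisymm (mul_le_mul_right (biInf_mono fun R hR => hR.1) _) ?_
  refine mul_le_mul_right (le_iInf₂ fun R hR => ENNReal.le_of_forall_pos_le_add ?_) _
  intro ε hε _
  have hδ : (0 : ℝ) < ε / 4 := by positivity
  have hopen : IsOpen (thickening (ε / 4 : ℝ) R) := isOpen_thickening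
  calc _ ≤ dis (thickening (ε / 4 : ℝ) R) :=
        iInf₂_le _ ⟨hR.mono (self_subset_thickening hδ R),
          hopen.svLowerSemicontinuous_corrMap, hopen.svLowerSemicontinuous_corrInv⟩
    _ ≤ dis R + ENNReal.ofReal (4 * (ε / 4)) := dis_thickening_le R _
    _ = dis R + ε := by rw [mul_div_cancel₀ _ four_ne_zero, ENNReal.ofReal_coe_nnreal]

theorem stmt_13 {X Y : Type*} [MetricSpace X] [MetricSpace Y] [Nonempty X] [Nonempty Y] :
    dGH X Y = dGHls X Y :=
  stmt_13_general
end
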